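/- arXiv:2107.02877 — 8 statements merged into one kernel-verified Lean document; each statement's English description precedes it below -/
import Mathlib

section
/- Let α₁, α₂ ∈ (0,1], let 0 < β ≤ γ, fix ε ∈ (0,1), and let T > 0 satisfy G(T)·(1+ε)·γ ≤ ε, where G(t) = max(t^{α₁}/Γ(α₁+1), t^{α₂}/Γ(α₂+1)). Fix x₀, y₀ > 0 and let Q = [x₀, x₀+ε·y₀] × [(1-ε)·y₀, (1+ε)·y₀]. If x, y : [0,T] → ℝ are continuous with (x(t), y(t)) ∈ Q for all t ∈ [0,T], then the functions x̃(t) = x₀ + ∫₀ᵗ f(x(s),y(s))·(t-s)^{α₁-1}/Γ(α₁) ds and ỹ(t) = y₀ − ∫₀ᵗ f(x(s),y(s))·(t-s)^{α₂-1}/Γ(α₂) ds also satisfy (x̃(t), ỹ(t)) ∈ Q for all t ∈ [0,T]. -/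
/-!
On `Q` the rate `f (x, y)` lies in `[0, γ (1 + ε) y₀]`, since `0 ≤ β x / (x + y) ≤ β ≤ γ`.
The Riemann–Liouville integral of order `α` is monotone with nonnegative kernel and sends the
constant `M` to `M t^α / Γ(α + 1)`, so both integrals lie in `[0, γ (1 + ε) y₀ G(T)] ⊆ [0, ε y₀]`.
-/

open Set intervalIntegral

noncomputable def riemannLiouville (α : ℝ) (g : ℝ → ℝ) (t : ℝ) : ℝ :=
  ∫ s in (0:ℝ)..t, g s * (t - s) ^ (α - 1) / Real.Gamma α

section RiemannLiouville

variable {α t : ℝ}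

lemma intervalIntegrable_sub_rpow (hα : 0 < α) :
    IntervalIntegrable (fun s => (t - s) ^ (α - 1)) MeasureTheory.volume 0 t := by
  simpa using ((intervalIntegrable_rpow' (by linarith : -1 < α - 1)
    (a := 0) (b := t)).comp_sub_left t).symm

lemma integral_sub_rpow (hα : 0 < α) :
    ∫ s in (0:ℝ)..t, (t - s) ^ (α - 1) = t ^ α / α := by
  rw [integral_comp_sub_left (fun u => u ^ (α - 1)) t, sub_self, sub_zero,
    integral_rpow (Or.inl (by linarith)), sub_add_cancel, Real.zero_rpow hα.ne', sub_zero]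

lemma riemannLiouville_const (hα : 0 < α) (M : ℝ) :
    riemannLiouville α (fun _ => M) t = M * t ^ α / Real.Gamma (α + 1) := by
  simp only [riemannLiouville, mul_div_assoc, integral_const_mul, integral_div,
    integral_sub_rpow hα, Real.Gamma_add_one hα.ne', div_div, mul_comm α]

lemma riemannLiouville_mem_Icc (hα : 0 < α) (ht : 0 ≤ t) {g : ℝ → ℝ} {M : ℝ}
    (hgc : ContinuousOn g (Icc 0 t)) (hg : ∀ s ∈ Icc 0 t, g s ∈ Icc 0 M) :
    riemannLiouville α g t ∈ Icc 0 (M * t ^ α / Real.Gamma (α + 1)) := by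
  have hΓ : 0 ≤ Real.Gamma α := (Real.Gamma_pos_of_pos hα).le
  have hkernel : ∀ s ∈ Icc 0 t, 0 ≤ (t - s) ^ (α - 1) :=
    fun s hs => Real.rpow_nonneg (sub_nonneg.2 hs.2) _
  refine ⟨integral_nonneg ht fun s hs => div_nonneg (mul_nonneg (hg s hs).1 (hkernel s hs)) hΓ,
    ?_⟩
  rw [← riemannLiouville_const hα]
  refine integral_mono_on ht ?_ ((intervalIntegrable_sub_rpow hα).const_mul M |>.div_const _)
    fun s hs => div_le_div_of_nonneg_right
      (mul_le_mul_of_nonneg_right (hg s hs).2 (hkernel s hs)) hΓ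
  exact ((intervalIntegrable_sub_rpow hα).continuousOn_mul
    (by rwa [uIcc_of_le ht])).div_const _

end RiemannLiouville

lemma rpow_div_Gamma_le_of_le {α t T : ℝ} (hα : 0 < α) (ht : 0 ≤ t) (htT : t ≤ T) :
    t ^ α / Real.Gamma (α + 1) ≤ T ^ α / Real.Gamma (α + 1) :=
  div_le_div_of_nonneg_right (Real.rpow_le_rpow ht htT hα.le)
    (Real.Gamma_pos_of_pos (by linarith)).le

lemma sub_mul_div_add_mul_mem_Icc {β γ x y : ℝ} (hβ : 0 ≤ β) (hβγ : β ≤ γ)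
    (hx : 0 ≤ x) (hy : 0 ≤ y) :
    (γ - β * x / (x + y)) * y ∈ Icc 0 (γ * y) := by
  have hfrac : β * x / (x + y) ∈ Icc 0 β := by
    rw [mul_div_assoc]
    exact ⟨by positivity, mul_le_of_le_one_right hβ
      (div_le_one_of_le₀ (le_add_of_nonneg_right hy) (add_nonneg hx hy))⟩
  constructor <;> nlinarith [hfrac.1, hfrac.2]

theorem stmt3_general (α₁ α₂ β γ ε T x₀ y₀ : ℝ)
    (hα₁ : α₁ ∈ Set.Ioc (0:ℝ) 1) (hα₂ : α₂ ∈ Set.Ioc (0:ℝ) 1)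
    (hβ : 0 < β) (hβγ : β ≤ γ) (hε : ε ∈ Set.Ioo (0:ℝ) 1)
    (G : ℝ → ℝ)
    (hG : ∀ t : ℝ, G t = max (t ^ α₁ / Real.Gamma (α₁ + 1)) (t ^ α₂ / Real.Gamma (α₂ + 1)))
    (hTcond : G T * (1 + ε) * γ ≤ ε)
    (hx₀ : 0 < x₀) (hy₀ : 0 < y₀)
    (f : ℝ → ℝ → ℝ) (hf : ∀ x y : ℝ, f x y = (γ - β * x / (x + y)) * y)
    (x y : ℝ → ℝ)
    (hxc : ContinuousOn x (Set.Icc 0 T)) (hyc : ContinuousOn y (Set.Icc 0 T))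
    (hQ : ∀ t ∈ Set.Icc (0:ℝ) T,
      x t ∈ Set.Icc x₀ (x₀ + ε * y₀) ∧ y t ∈ Set.Icc ((1 - ε) * y₀) ((1 + ε) * y₀)) :
    ∀ t ∈ Set.Icc (0:ℝ) T,
      (x₀ + ∫ s in (0:ℝ)..t, f (x s) (y s) * (t - s) ^ (α₁ - 1) / Real.Gamma α₁)
        ∈ Set.Icc x₀ (x₀ + ε * y₀) ∧
      (y₀ - ∫ s in (0:ℝ)..t, f (x s) (y s) * (t - s) ^ (α₂ - 1) / Real.Gamma α₂)
        ∈ Set.Icc ((1 - ε) * y₀) ((1 + ε) * y₀) := by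
  rintro t ⟨ht0, htT⟩
  have hpos : ∀ s ∈ Icc 0 T, 0 < x s ∧ 0 ≤ y s := fun s hs =>
    ⟨hx₀.trans_le (hQ s hs).1.1, (mul_nonneg (by linarith [hε.2]) hy₀.le).trans (hQ s hs).2.1⟩
  have hf_mem : ∀ s ∈ Icc 0 t, f (x s) (y s) ∈ Icc 0 (γ * ((1 + ε) * y₀)) := by
    intro s hs
    have hsT : s ∈ Icc 0 T := ⟨hs.1, hs.2.trans htT⟩
    have := sub_mul_div_add_mul_mem_Icc hβ.le hβγ (hpos s hsT).1.le (hpos s hsT).2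
    rw [hf]
    exact ⟨this.1, this.2.trans (mul_le_mul_of_nonneg_left (hQ s hsT).2.2 (by linarith))⟩
  have hf_cont : ContinuousOn (fun s => f (x s) (y s)) (Icc 0 t) := by
    simp only [hf]
    refine ((continuousOn_const.sub ((continuousOn_const.mul hxc).div (hxc.add hyc)
      fun s hs => (add_pos_of_pos_of_nonneg (hpos s hs).1 (hpos s hs).2).ne')).mul hyc).mono
      (Icc_subset_Icc_right htT)
  have hI : ∀ α, 0 < α → T ^ α / Real.Gamma (α + 1) ≤ G T →
      riemannLiouville α (fun s => f (x s) (y s)) t ∈ Icc 0 (ε * y₀) := by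
    intro α hα hαG
    have hγ : 0 ≤ γ * ((1 + ε) * y₀) :=
      mul_nonneg (hβ.le.trans hβγ) (mul_nonneg (by linarith [hε.1]) hy₀.le)
    obtain ⟨hI0, hIM⟩ := riemannLiouville_mem_Icc hα ht0 hf_cont hf_mem
    refine ⟨hI0, hIM.trans ?_⟩
    calc γ * ((1 + ε) * y₀) * t ^ α / Real.Gamma (α + 1)
        ≤ γ * ((1 + ε) * y₀) * G T := by
          rw [mul_div_assoc]
          exact mul_le_mul_of_nonneg_left ((rpow_div_Gamma_le_of_le hα ht0 htT).trans hαG) hγ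
      _ = G T * (1 + ε) * γ * y₀ := by ring
      _ ≤ ε * y₀ := mul_le_mul_of_nonneg_right hTcond hy₀.le
  obtain ⟨h₁0, h₁⟩ := hI α₁ hα₁.1 (hG T ▸ le_max_left _ _)
  obtain ⟨h₂0, h₂⟩ := hI α₂ hα₂.1 (hG T ▸ le_max_right _ _)
  unfold riemannLiouville at h₁0 h₁ h₂0 h₂
  exact ⟨⟨by linarith, by linarith⟩, ⟨by linarith, by linarith⟩⟩

theorem stmt3 (α₁ α₂ β γ ε T x₀ y₀ : ℝ)
    (hα₁ : α₁ ∈ Set.Ioc (0:ℝ) 1) (hα₂ : α₂ ∈ Set.Ioc (0:ℝ) 1)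
    (hβ : 0 < β) (hβγ : β ≤ γ) (hε : ε ∈ Set.Ioo (0:ℝ) 1) (hT : 0 < T)
    (G : ℝ → ℝ)
    (hG : ∀ t : ℝ, G t = max (t ^ α₁ / Real.Gamma (α₁ + 1)) (t ^ α₂ / Real.Gamma (α₂ + 1)))
    (hTcond : G T * (1 + ε) * γ ≤ ε)
    (hx₀ : 0 < x₀) (hy₀ : 0 < y₀)
    (f : ℝ → ℝ → ℝ) (hf : ∀ x y : ℝ, f x y = (γ - β * x / (x + y)) * y)
    (x y : ℝ → ℝ)
    (hxc : ContinuousOn x (Set.Icc 0 T)) (hyc : ContinuousOn y (Set.Icc 0 T))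
    (hQ : ∀ t ∈ Set.Icc (0:ℝ) T,
      x t ∈ Set.Icc x₀ (x₀ + ε * y₀) ∧ y t ∈ Set.Icc ((1 - ε) * y₀) ((1 + ε) * y₀)) :
    ∀ t ∈ Set.Icc (0:ℝ) T,
      (x₀ + ∫ s in (0:ℝ)..t, f (x s) (y s) * (t - s) ^ (α₁ - 1) / Real.Gamma α₁)
        ∈ Set.Icc x₀ (x₀ + ε * y₀) ∧
      (y₀ - ∫ s in (0:ℝ)..t, f (x s) (y s) * (t - s) ^ (α₂ - 1) / Real.Gamma α₂)
        ∈ Set.Icc ((1 - ε) * y₀) ((1 + ε) * y₀) :=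
  stmt3_general α₁ α₂ β γ ε T x₀ y₀ hα₁ hα₂ hβ hβγ hε G hG hTcond hx₀ hy₀ f hf x y hxc hyc hQ
end

section
/- If u : [a,b] → ℝ is continuously differentiable and α ∈ [0,1), then the Caputo–Fabrizio operator D^α u(t) = (M(α)/(1-α)) ∫ₐᵗ u'(τ)·exp(−(α/(1-α))·(t−τ)) dτ is differentiable in t on (a,b) and satisfies d/dt D^α u(t) = (M(α)/(1-α))·u'(t) − (α/(1-α))·D^α u(t). -/
/-! The kernel factors as `exp (-k (t - τ)) = exp (-k t) * exp (k τ)`, so the operator is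
`exp (-k t)` times an ordinary integral with variable upper limit; the product rule and the
fundamental theorem of calculus give the derivative, the exponential's own derivative producing
the term `-k D t`. -/

open Real MeasureTheory Filter Topology

theorem integral_mul_exp_neg_mul_sub_eq (f : ℝ → ℝ) (k a s : ℝ) :
    ∫ τ in a..s, f τ * exp (-k * (s - τ)) = exp (-k * s) * ∫ τ in a..s, f τ * exp (k * τ) := by
  rw [← intervalIntegral.integral_const_mul]
  refine intervalIntegral.integral_congr fun τ _ => ?_
  rw [mul_left_comm, ← exp_add]
  ring_nf

theorem hasDerivAt_integral_mul_exp_neg_mul_sub {f : ℝ → ℝ} {a t : ℝ} (k : ℝ)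
    (hint : IntervalIntegrable f volume a t) (hmeas : StronglyMeasurableAtFilter f (𝓝 t))
    (hcont : ContinuousAt f t) :
    HasDerivAt (fun s => ∫ τ in a..s, f τ * exp (-k * (s - τ)))
      (f t - k * ∫ τ in a..t, f τ * exp (-k * (t - τ))) t := by
  have hexp : Continuous fun τ => exp (k * τ) := by fun_prop
  have hF : HasDerivAt (fun s => ∫ τ in a..s, f τ * exp (k * τ)) (f t * exp (k * t)) t := by
    obtain ⟨s, hs, hfs⟩ := hmeas
    exact intervalIntegral.integral_hasDerivAt_right (hint.mul_continuousOn hexp.continuousOn)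
      ⟨s, hs, hfs.mul hexp.aestronglyMeasurable⟩ (hcont.mul hexp.continuousAt)
  have hE : HasDerivAt (fun s => exp (-k * s)) (exp (-k * t) * (-k * 1)) t :=
    ((hasDerivAt_id t).const_mul (-k)).exp
  simp only [integral_mul_exp_neg_mul_sub_eq]
  have hEE : exp (-k * t) * exp (k * t) = 1 := by rw [← exp_add]; simp
  exact (hE.mul hF).congr_deriv (by linear_combination f t * hEE)

theorem stmt5_general (M : ℝ → ℝ)
    (a b : ℝ) (α : ℝ)
    (u' : ℝ → ℝ)
    (hu' : ContinuousOn u' (Set.Icc a b))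
    (D : ℝ → ℝ)
    (hD : ∀ t : ℝ, D t = M α / (1 - α) *
      ∫ τ in a..t, u' τ * Real.exp (-(α / (1 - α)) * (t - τ))) :
    ∀ t ∈ Set.Ioo a b,
      HasDerivAt D (M α / (1 - α) * u' t - α / (1 - α) * D t) t := by
  intro t ht
  have hint : IntervalIntegrable u' volume a t :=
    (hu'.mono (Set.uIcc_subset_Icc (Set.left_mem_Icc.2 (ht.1.trans ht.2).le)
      (Set.Ioo_subset_Icc_self ht))).intervalIntegrable
  have hmeas : StronglyMeasurableAtFilter u' (𝓝 t) :=
    (hu'.mono Set.Ioo_subset_Icc_self).stronglyMeasurableAtFilter isOpen_Ioo t ht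
  have hcont : ContinuousAt u' t := hu'.continuousAt (Icc_mem_nhds ht.1 ht.2)
  rw [show D = _ from funext hD]
  exact ((hasDerivAt_integral_mul_exp_neg_mul_sub _ hint hmeas hcont).const_mul _).congr_deriv
    (by ring)

theorem stmt5 (M : ℝ → ℝ) (hM : ∀ α ∈ Set.Icc (0:ℝ) 1, 0 ≤ M α)
    (a b : ℝ) (hab : a < b) (α : ℝ) (hα : α ∈ Set.Ico (0:ℝ) 1)
    (u u' : ℝ → ℝ) (hu : ∀ t ∈ Set.Icc a b, HasDerivAt u (u' t) t)
    (hu' : ContinuousOn u' (Set.Icc a b))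
    (D : ℝ → ℝ)
    (hD : ∀ t : ℝ, D t = M α / (1 - α) *
      ∫ τ in a..t, u' τ * Real.exp (-(α / (1 - α)) * (t - τ))) :
    ∀ t ∈ Set.Ioo a b,
      HasDerivAt D (M α / (1 - α) * u' t - α / (1 - α) * D t) t :=
  stmt5_general M a b α u' hu' D hD
end

section
/- Let α ∈ [0,1), β, γ > 0, M(α) > 0, and P > 0. Define B = (α + M(α) + (1-α)(β-γ))/2 and C = M(α)·(α − (1-α)·γ). Then for all x ∈ ℝ, the quantity (B·x − P/2)² − C·x² + M(α)·P·x is nonnegative; indeed it equals (B² − C)·x² − (B − M(α))·P·x + P²/4, a quadratic in x whose discriminant equals −(1-α)·β·M(α)·P² < 0. -/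
/-! The key identity is `B² - C = (B - M)² + (1 - α) β M`. It makes the leading coefficient
`B² - C` of the quadratic positive and turns its discriminant `((B - M) P)² - (B² - C) P²` into
`-(1 - α) β M P² < 0`; a quadratic with positive leading coefficient and negative discriminant is
positive everywhere. -/

lemma four_mul_mul_quadratic_eq {R : Type*} [CommRing R] (a b c x : R) :
    4 * a * (a * (x * x) + b * x + c) = (2 * a * x + b) ^ 2 - discrim a b c := by
  rw [discrim]
  ring

lemma quadratic_pos_of_discrim_neg {K : Type*} [Field K] [LinearOrder K] [IsStrictOrderedRing K]
    {a b c : K} (ha : 0 < a) (h : discrim a b c < 0) (x : K) :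
    0 < a * (x * x) + b * x + c := by
  have h4 : 0 < 4 * a * (a * (x * x) + b * x + c) := by
    rw [four_mul_mul_quadratic_eq]
    nlinarith [sq_nonneg (2 * a * x + b)]
  exact pos_of_mul_pos_right h4 (by positivity)

lemma sq_sub_eq_sq_add_of_eq {α β γ Mα B C : ℝ} (hB : B = (α + Mα + (1 - α) * (β - γ)) / 2)
    (hC : C = Mα * (α - (1 - α) * γ)) :
    B ^ 2 - C = (B - Mα) ^ 2 + (1 - α) * β * Mα := by
  subst hB hC
  ring

theorem stmt6_general (α β γ Mα P : ℝ) (hα : α ∈ Set.Ico (0:ℝ) 1)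
    (hβ : 0 < β) (hM : 0 < Mα) (hP : 0 < P)
    (B C : ℝ) (hB : B = (α + Mα + (1 - α) * (β - γ)) / 2)
    (hC : C = Mα * (α - (1 - α) * γ)) :
    (∀ x : ℝ,
      (B * x - P / 2) ^ 2 - C * x ^ 2 + Mα * P * x =
        (B ^ 2 - C) * x ^ 2 - (B - Mα) * P * x + P ^ 2 / 4 ∧
      0 ≤ (B * x - P / 2) ^ 2 - C * x ^ 2 + Mα * P * x) ∧
    ((B - Mα) * P) ^ 2 - 4 * (B ^ 2 - C) * (P ^ 2 / 4) = -(1 - α) * β * Mα * P ^ 2 ∧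
    -(1 - α) * β * Mα * P ^ 2 < 0 := by
  have hkey := sq_sub_eq_sq_add_of_eq hB hC
  have hδ : 0 < (1 - α) * β * Mα := mul_pos (mul_pos (sub_pos.2 hα.2) hβ) hM
  have hdisc : ((B - Mα) * P) ^ 2 - 4 * (B ^ 2 - C) * (P ^ 2 / 4) = -(1 - α) * β * Mα * P ^ 2 := by
    rw [hkey]
    ring
  have hneg : -(1 - α) * β * Mα * P ^ 2 < 0 := by
    have := mul_pos hδ (pow_pos hP 2)
    linarith
  have ha : 0 < B ^ 2 - C := by
    rw [hkey]
    exact add_pos_of_nonneg_of_pos (sq_nonneg _) hδ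
  refine ⟨fun x => ⟨by ring, ?_⟩, hdisc, hneg⟩
  have hpos := quadratic_pos_of_discrim_neg (b := -((B - Mα) * P)) (c := P ^ 2 / 4) ha
    (by rw [discrim, neg_sq]; linarith) x
  calc 0 ≤ (B ^ 2 - C) * (x * x) + -((B - Mα) * P) * x + P ^ 2 / 4 := hpos.le
    _ = _ := by ring

theorem stmt6 (α β γ Mα P : ℝ) (hα : α ∈ Set.Ico (0:ℝ) 1)
    (hβ : 0 < β) (hγ : 0 < γ) (hM : 0 < Mα) (hP : 0 < P)
    (B C : ℝ) (hB : B = (α + Mα + (1 - α) * (β - γ)) / 2)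
    (hC : C = Mα * (α - (1 - α) * γ)) :
    (∀ x : ℝ,
      (B * x - P / 2) ^ 2 - C * x ^ 2 + Mα * P * x =
        (B ^ 2 - C) * x ^ 2 - (B - Mα) * P * x + P ^ 2 / 4 ∧
      0 ≤ (B * x - P / 2) ^ 2 - C * x ^ 2 + Mα * P * x) ∧
    ((B - Mα) * P) ^ 2 - 4 * (B ^ 2 - C) * (P ^ 2 / 4) = -(1 - α) * β * Mα * P ^ 2 ∧
    -(1 - α) * β * Mα * P ^ 2 < 0 :=
  stmt6_general α β γ Mα P hα hβ hM hP B C hB hC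
end

section
/- Let α ∈ [0,1), β, γ > 0 with γ < α/(1-α), M(α) ≥ α, M(α) > 0, and P > 0. The equilibria of the scalar ODE x' = (β − γ − β·x/(g(x)+x))·x, i.e. the zeros of its right-hand side among nonnegative x with g(x)+x > 0, are exactly x = 0 and x = E := (β−γ)·P / (α·(β−γ) + M(α)·γ), and E > 0 if and only if β/γ > 1. -/
/-!
Write `Q(x)` for the radicand, so that `M g(x) = -B x + P/2 + √Q(x)`. The choice of `B` and `C`
makes `Q(x) = ((B - M) x - P/2)² + M (1 - α) β x²`, so the square root is never truncated.
A positive `x` is an equilibrium iff `(β - γ) g(x) = γ x`, i.e. iff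
`(β - γ) √Q(x) = w(x) := M γ x + (β - γ) (B x - P/2)`. Since
`w(x)² - (β - γ)² Q(x) = M β x ((α (β - γ) + M γ) x - (β - γ) P)`,
squaring forces `x = E`; conversely `2 w(E) = E (M β + (1 - α) (β - γ)²) ≥ 0`,
so at `x = E` the squaring loses nothing.
-/

noncomputable def radicand (B C M P x : ℝ) : ℝ := (B * x - P / 2) ^ 2 - C * x ^ 2 + M * P * x

lemma sub_sub_div_add_eq_zero_iff {K : Type*} [Field K] {β γ x y : K} (h : y + x ≠ 0) :
    β - γ - β * x / (y + x) = 0 ↔ (β - γ) * y = γ * x := by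
  rw [sub_eq_zero, eq_div_iff h]
  constructor <;> intro h <;> linear_combination h

section

variable {α β γ M P B C x : ℝ}

lemma radicand_eq (hB : B = (α + M + (1 - α) * (β - γ)) / 2)
    (hC : C = M * (α - (1 - α) * γ)) :
    radicand B C M P x = ((B - M) * x - P / 2) ^ 2 + M * (1 - α) * β * x ^ 2 := by
  subst hB hC
  unfold radicand
  ring

lemma radicand_nonneg (hB : B = (α + M + (1 - α) * (β - γ)) / 2)
    (hC : C = M * (α - (1 - α) * γ)) (hα : α ≤ 1) (hβ : 0 ≤ β) (hM : 0 ≤ M) :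
    0 ≤ radicand B C M P x := by
  have : 0 ≤ 1 - α := sub_nonneg.2 hα
  rw [radicand_eq hB hC]
  positivity

lemma sq_sub_sq_mul_radicand (hB : B = (α + M + (1 - α) * (β - γ)) / 2)
    (hC : C = M * (α - (1 - α) * γ)) :
    (M * γ * x + (β - γ) * (B * x - P / 2)) ^ 2 - (β - γ) ^ 2 * radicand B C M P x =
      M * β * x * ((α * (β - γ) + M * γ) * x - (β - γ) * P) := by
  subst hB hC
  unfold radicand
  ring

lemma two_mul_eq_of_mul_eq (hB : B = (α + M + (1 - α) * (β - γ)) / 2)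
    (hx : (α * (β - γ) + M * γ) * x = (β - γ) * P) :
    2 * (M * γ * x + (β - γ) * (B * x - P / 2)) = x * (M * β + (1 - α) * (β - γ) ^ 2) := by
  subst hB
  linear_combination hx

lemma mul_sub_add_mul_pos (hα : 0 ≤ α) (hMα : α ≤ M) (hM : 0 < M) (hβ : 0 < β)
    (hγ : 0 < γ) :
    0 < α * (β - γ) + M * γ := by
  rcases hα.eq_or_lt with rfl | hα
  · simpa using mul_pos hM hγ
  · nlinarith [mul_pos hα hβ, mul_nonneg (sub_nonneg.2 hMα) hγ.le]

lemma mul_div_eq_mul_iff_mul_sqrt_eq (hM : M ≠ 0) (s : ℝ) :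
    (β - γ) * ((-B * x + P / 2 + s) / M) = γ * x ↔
      (β - γ) * s = M * γ * x + (β - γ) * (B * x - P / 2) := by
  rw [mul_div_assoc', div_eq_iff hM]
  constructor <;> intro h <;> linear_combination h

lemma mul_sqrt_radicand_eq_iff (hB : B = (α + M + (1 - α) * (β - γ)) / 2)
    (hC : C = M * (α - (1 - α) * γ)) (hα : α ≤ 1) (hβ : 0 < β) (hM : 0 < M) (hP : 0 < P)
    (hD : 0 < α * (β - γ) + M * γ) (hx : 0 < x) :
    (β - γ) * √(radicand B C M P x) = M * γ * x + (β - γ) * (B * x - P / 2) ↔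
      (α * (β - γ) + M * γ) * x = (β - γ) * P := by
  have hQ : 0 ≤ radicand B C M P x := radicand_nonneg hB hC hα hβ.le hM.le
  have hsq := sq_sub_sq_mul_radicand (P := P) (x := x) hB hC
  constructor
  · intro h
    rw [← h, mul_pow, Real.sq_sqrt hQ, sub_self, eq_comm] at hsq
    have hMβx : M * β * x ≠ 0 := by positivity
    exact sub_eq_zero.1 ((mul_eq_zero.1 hsq).resolve_left hMβx)
  · intro h
    have hβγ : 0 ≤ β - γ := (pos_of_mul_pos_left (h ▸ mul_pos hD hx) hP.le).le
    have hw : 0 ≤ M * γ * x + (β - γ) * (B * x - P / 2) := by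
      have : 0 ≤ 1 - α := sub_nonneg.2 hα
      have := two_mul_eq_of_mul_eq hB h
      nlinarith [mul_nonneg hx.le (by positivity : 0 ≤ M * β + (1 - α) * (β - γ) ^ 2)]
    rw [h, sub_self, mul_zero, sub_eq_zero] at hsq
    rw [← sq_eq_sq₀ (by positivity) hw, mul_pow, Real.sq_sqrt hQ, hsq]

end

theorem stmt10_general (α β γ Mα P : ℝ) (hα : α ∈ Set.Ico (0:ℝ) 1)
    (hβ : 0 < β) (hγ : 0 < γ)
    (hMα : α ≤ Mα) (hM : 0 < Mα) (hP : 0 < P)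
    (B C : ℝ) (hB : B = (α + Mα + (1 - α) * (β - γ)) / 2)
    (hC : C = Mα * (α - (1 - α) * γ))
    (g : ℝ → ℝ)
    (hg : ∀ x : ℝ, g x =
      (-B * x + P / 2 +
        Real.sqrt ((B * x - P / 2) ^ 2 - C * x ^ 2 + Mα * P * x)) / Mα)
    (E : ℝ) (hE : E = (β - γ) * P / (α * (β - γ) + Mα * γ)) :
    (∀ x : ℝ, 0 ≤ x → 0 < g x + x → 0 ≤ g x →
      ((β - γ - β * x / (g x + x)) * x = 0 ↔ x = 0 ∨ x = E)) ∧
    (0 < E ↔ 1 < β / γ) := by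
  have hD := mul_sub_add_mul_pos hα.1 hMα hM hβ hγ
  subst hE
  refine ⟨fun x hx hgx _ => ?_, ?_⟩
  · rcases hx.eq_or_lt with rfl | hx
    · simp
    have hgx' : g x = (-B * x + P / 2 + √(radicand B C Mα P x)) / Mα := hg x
    rw [mul_eq_zero, or_iff_left hx.ne', or_iff_right hx.ne',
      sub_sub_div_add_eq_zero_iff hgx.ne', hgx', mul_div_eq_mul_iff_mul_sqrt_eq hM.ne',
      mul_sqrt_radicand_eq_iff hB hC hα.2.le hβ hM hP hD hx, eq_div_iff hD.ne', mul_comm x]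
  · rw [div_pos_iff_of_pos_right hD, mul_pos_iff_of_pos_right hP, sub_pos, one_lt_div hγ]

theorem stmt10 (α β γ Mα P : ℝ) (hα : α ∈ Set.Ico (0:ℝ) 1)
    (hβ : 0 < β) (hγ : 0 < γ) (hγα : γ < α / (1 - α))
    (hMα : α ≤ Mα) (hM : 0 < Mα) (hP : 0 < P)
    (B C : ℝ) (hB : B = (α + Mα + (1 - α) * (β - γ)) / 2)
    (hC : C = Mα * (α - (1 - α) * γ))
    (g : ℝ → ℝ)
    (hg : ∀ x : ℝ, g x =
      (-B * x + P / 2 +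
        Real.sqrt ((B * x - P / 2) ^ 2 - C * x ^ 2 + Mα * P * x)) / Mα)
    (E : ℝ) (hE : E = (β - γ) * P / (α * (β - γ) + Mα * γ)) :
    (∀ x : ℝ, 0 ≤ x → 0 < g x + x → 0 ≤ g x →
      ((β - γ - β * x / (g x + x)) * x = 0 ↔ x = 0 ∨ x = E)) ∧
    (0 < E ↔ 1 < β / γ) :=
  stmt10_general α β γ Mα P hα hβ hγ hMα hM hP B C hB hC g hg E hE
end

section
/- With parameters α ∈ [0,1), β, γ > 0, M(α) ≥ α > 0, P > 0, and E = (β−γ)·P/(α·(β−γ)+M(α)·γ), if β > γ then 1 + g'(E) > 0, where g is the function g(x) = (−B·x + P/2 + √((B·x−P/2)² − C·x² + M(α)·P·x))/M(α), B = (α+M(α)+(1-α)(β-γ))/2, C = M(α)·(α−(1-α)γ). In fact 1 + g'(E) ≥ (1-α)·(β−γ)·(M(α)·γ + β − γ) / ((1-α)·(β−γ)² + β·M(α)). -/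
/-!
At `E` the radicand of `g` is a perfect square `S ^ 2` with `S > 0`, so `g` is differentiable
there and `1 + g'(E)` has the closed form `β (M - α + (1 - α)(β - γ)) / (M β + (1 - α)(β - γ)²)`.
This is positive, and it dominates the stated lower bound (which has the same denominator) because
`(1 - α) γ (β - γ) (M - 1) ≤ β (M - α)`, a consequence of `(1 - α) γ < α`.
-/

theorem hasDerivAt_sqrt_root_of_radicand_eq_sq {B C M P x S : ℝ} (hS : 0 < S)
    (hq : (B * x - P / 2) ^ 2 - C * x ^ 2 + M * P * x = S ^ 2) :
    HasDerivAt (fun y => (-B * y + P / 2 + √((B * y - P / 2) ^ 2 - C * y ^ 2 + M * P * y)) / M)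
      ((-B + (B * (B * x - P / 2) - C * x + M * P / 2) / S) / M) x := by
  have hrad : HasDerivAt (fun y => (B * y - P / 2) ^ 2 - C * y ^ 2 + M * P * y)
      (2 * (B * (B * x - P / 2) - C * x + M * P / 2)) x := by
    refine (((((hasDerivAt_id x).const_mul B).sub_const (P / 2)).pow 2).sub
      ((hasDerivAt_pow 2 x).const_mul C) |>.add ((hasDerivAt_id x).const_mul (M * P))).congr_deriv ?_
    simp only [id]
    push_cast
    ring
  have hsqrt := hrad.sqrt (by rw [hq]; positivity)
  rw [hq, Real.sqrt_sq hS.le, mul_div_mul_left _ _ two_ne_zero] at hsqrt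
  simpa using ((((hasDerivAt_id x).const_mul (-B)).add_const (P / 2)).add hsqrt).div_const M

section

variable {α β γ M P : ℝ}

theorem radicand_eq_sq (hD : α * (β - γ) + M * γ ≠ 0) :
    let B := (α + M + (1 - α) * (β - γ)) / 2
    let C := M * (α - (1 - α) * γ)
    let E := (β - γ) * P / (α * (β - γ) + M * γ)
    (B * E - P / 2) ^ 2 - C * E ^ 2 + M * P * E
      = (P * (M * β + (1 - α) * (β - γ) ^ 2) / (2 * (α * (β - γ) + M * γ))) ^ 2 := by
  intro B C E
  simp only [B, C, E]
  field_simp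
  ring

theorem one_add_deriv_eq (hD : α * (β - γ) + M * γ ≠ 0) (hM : M ≠ 0) (hP : P ≠ 0)
    (hN : M * β + (1 - α) * (β - γ) ^ 2 ≠ 0) :
    let B := (α + M + (1 - α) * (β - γ)) / 2
    let C := M * (α - (1 - α) * γ)
    let E := (β - γ) * P / (α * (β - γ) + M * γ)
    let S := P * (M * β + (1 - α) * (β - γ) ^ 2) / (2 * (α * (β - γ) + M * γ))
    1 + (-B + (B * (B * E - P / 2) - C * E + M * P / 2) / S) / M
      = β * (M - α + (1 - α) * (β - γ)) / (M * β + (1 - α) * (β - γ) ^ 2) := by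
  intro B C E S
  simp only [B, C, E, S]
  field_simp
  ring

theorem one_sub_mul_mul_sub_mul_sub_one_le (hα : 0 < α) (hα1 : α < 1) (hγ : 0 < γ) (hβγ : γ < β)
    (hγα : (1 - α) * γ < α) (hM : α ≤ M) :
    (1 - α) * γ * (β - γ) * (M - 1) ≤ β * (M - α) := by
  rcases le_or_gt M 1 with hM1 | hM1
  · have : (1 - α) * γ * (β - γ) * (M - 1) ≤ 0 :=
      mul_nonpos_of_nonneg_of_nonpos
        (mul_nonneg (mul_nonneg (by linarith) hγ.le) (by linarith)) (by linarith)
    nlinarith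
  · -- `(1 - α) γ (β - γ) (M - 1) ≤ α (β - γ) (M - 1)`, and the gap to `β (M - α)` is
    -- `(1 - α) β M + α γ (M - 1) ≥ 0`.
    nlinarith [mul_lt_mul_of_pos_right hγα (mul_pos (sub_pos.2 hβγ) (sub_pos.2 hM1)),
      mul_nonneg (mul_nonneg hα.le hγ.le) (sub_pos.2 hM1).le,
      mul_nonneg (mul_nonneg (hγ.trans hβγ).le (hα.trans_le hM).le) (sub_pos.2 hα1).le]

end

theorem stmt11 (α β γ Mα P : ℝ) (hα : α ∈ Set.Ico (0:ℝ) 1)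
    (hαpos : 0 < α) (hγ : 0 < γ) (hβγ : γ < β)
    (hγα : γ < α / (1 - α)) (hMα : α ≤ Mα) (hP : 0 < P)
    (B C : ℝ) (hB : B = (α + Mα + (1 - α) * (β - γ)) / 2)
    (hC : C = Mα * (α - (1 - α) * γ))
    (g : ℝ → ℝ)
    (hg : ∀ x : ℝ, g x =
      (-B * x + P / 2 +
        Real.sqrt ((B * x - P / 2) ^ 2 - C * x ^ 2 + Mα * P * x)) / Mα)
    (E : ℝ) (hE : E = (β - γ) * P / (α * (β - γ) + Mα * γ)) :
    0 < 1 + deriv g E ∧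
    (1 - α) * (β - γ) * (Mα * γ + β - γ) / ((1 - α) * (β - γ) ^ 2 + β * Mα)
      ≤ 1 + deriv g E := by
  have hα1 : 0 < 1 - α := sub_pos.2 hα.2
  have hM : 0 < Mα := hαpos.trans_le hMα
  have hD : 0 < α * (β - γ) + Mα * γ := by nlinarith
  have hN : 0 < Mα * β + (1 - α) * (β - γ) ^ 2 := by nlinarith [sq_nonneg (β - γ)]
  subst hB hC hE
  rw [show g = _ from funext hg,
    (hasDerivAt_sqrt_root_of_radicand_eq_sq (by positivity) (radicand_eq_sq hD.ne')).deriv,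
    one_add_deriv_eq hD.ne' hM.ne' hP.ne' hN.ne']
  have hkey := one_sub_mul_mul_sub_mul_sub_one_le hαpos hα.2 hγ hβγ (by rwa [lt_div_iff₀ hα1, mul_comm] at hγα) hMα
  constructor
  · have : 0 < Mα - α + (1 - α) * (β - γ) := by nlinarith
    have := hγ.trans hβγ
    positivity
  · rw [add_comm ((1 - α) * _), mul_comm β Mα]
    refine div_le_div_of_nonneg_right ?_ hN.le
    nlinarith
end

section
/- With g as in the Caputo–Fabrizio reduction (parameters α ∈ [0,1), β, γ > 0, M(α) = 1, P > 0), one has 1 + g'(0) = (1-α)·(1 − β + γ). In particular, if β ≤ γ then 1 + g'(0) > 0, and since g is convex, 1 + g'(x) > 0 for all x ≥ 0. -/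
/-!
Completing the square, the radicand equals `ℓ(x)² + (1-α)β x²` with `ℓ(x) = (1-B)x + P/2`, so
`x + g(x) = ℓ(x) + √(ℓ(x)² + (1-α)β x²)`. Hence `1 + g'(x) = (1-B) + ((1-B)ℓ(x) + (1-α)βx)/√(…)`,
which is `2(1-B) = (1-α)(1-β+γ)` at `x = 0`. When `β ≤ γ` we have `1 - B > 0`, and then every term
is positive for `x ≥ 0`.
-/

theorem hasDerivAt_affine_add_sqrt (a b K x : ℝ) (hx : (a * x + b) ^ 2 + K * x ^ 2 ≠ 0) :
    HasDerivAt (fun x => a * x + b + √((a * x + b) ^ 2 + K * x ^ 2))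
      (a + (a * (a * x + b) + K * x) / √((a * x + b) ^ 2 + K * x ^ 2)) x := by
  have hlin : HasDerivAt (fun x => a * x + b) a x := by
    simpa using ((hasDerivAt_id x).const_mul a).add_const b
  have hrad : HasDerivAt (fun x => (a * x + b) ^ 2 + K * x ^ 2)
      (2 * (a * (a * x + b) + K * x)) x :=
    ((hlin.fun_pow 2).add ((hasDerivAt_pow 2 x).const_mul K)).congr_deriv (by push_cast; ring)
  exact (hlin.add (hrad.sqrt hx)).congr_deriv (by rw [mul_div_mul_left _ _ two_ne_zero])

theorem one_add_deriv_of_add_id_eq_affine_add_sqrt {g : ℝ → ℝ} {a b K x : ℝ}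
    (hg : ∀ x, x + g x = a * x + b + √((a * x + b) ^ 2 + K * x ^ 2))
    (hx : 0 < a * x + b) (hK : 0 ≤ K) :
    1 + deriv g x = a + (a * (a * x + b) + K * x) / √((a * x + b) ^ 2 + K * x ^ 2) := by
  have hg' : g = fun x => (a * x + b + √((a * x + b) ^ 2 + K * x ^ 2)) - x := by
    funext x
    rw [← hg]
    ring
  rw [hg', ((hasDerivAt_affine_add_sqrt a b K x (by positivity)).fun_sub (hasDerivAt_id' x)).deriv]
  ring

theorem stmt12_general (α β γ P : ℝ) (hα : α ∈ Set.Ico (0:ℝ) 1)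
    (hβ : 0 < β) (hP : 0 < P)
    (B C : ℝ) (hB : B = (α + 1 + (1 - α) * (β - γ)) / 2)
    (hC : C = α - (1 - α) * γ)
    (g : ℝ → ℝ)
    (hg : ∀ x : ℝ, g x =
      (-B * x + P / 2 +
        Real.sqrt ((B * x - P / 2) ^ 2 - C * x ^ 2 + P * x)) / 1) :
    1 + deriv g 0 = (1 - α) * (1 - β + γ) ∧
    (β ≤ γ → 0 < 1 + deriv g 0 ∧ ∀ x : ℝ, 0 ≤ x → 0 < 1 + deriv g x) := by
  have hK : 0 ≤ (1 - α) * β := mul_nonneg (sub_nonneg.mpr hα.2.le) hβ.le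
  have hsq : ∀ x, x + g x =
      (1 - B) * x + P / 2 + √(((1 - B) * x + P / 2) ^ 2 + (1 - α) * β * x ^ 2) := by
    intro x
    have hrad : (B * x - P / 2) ^ 2 - C * x ^ 2 + P * x =
        ((1 - B) * x + P / 2) ^ 2 + (1 - α) * β * x ^ 2 := by
      rw [hB, hC]; ring
    rw [hg, hrad]
    ring
  have hderiv (x : ℝ) (hx : 0 < (1 - B) * x + P / 2) :=
    one_add_deriv_of_add_id_eq_affine_add_sqrt hsq hx hK
  refine ⟨?_, fun hβγ => ?_⟩
  · have hsqrt0 : √(((1 - B) * 0 + P / 2) ^ 2 + (1 - α) * β * 0 ^ 2) = P / 2 := by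
      simpa using Real.sqrt_sq (by positivity : 0 ≤ P / 2)
    rw [hderiv 0 (by linarith), hsqrt0, hB]
    field_simp
    ring
  · have hB1 : 0 < 1 - B := by
      rw [hB]; nlinarith [hα.2]
    have hpos (x : ℝ) (hx : 0 ≤ x) : 0 < 1 + deriv g x := by
      rw [hderiv x (by positivity)]
      positivity
    exact ⟨hpos 0 le_rfl, hpos⟩

theorem stmt12 (α β γ P : ℝ) (hα : α ∈ Set.Ico (0:ℝ) 1)
    (hβ : 0 < β) (hγ : 0 < γ) (hγα : γ < α / (1 - α)) (hP : 0 < P)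
    (B C : ℝ) (hB : B = (α + 1 + (1 - α) * (β - γ)) / 2)
    (hC : C = α - (1 - α) * γ)
    (g : ℝ → ℝ)
    (hg : ∀ x : ℝ, g x =
      (-B * x + P / 2 +
        Real.sqrt ((B * x - P / 2) ^ 2 - C * x ^ 2 + P * x)) / 1)
    (hrad : ∀ x : ℝ, 0 < (B * x - P / 2) ^ 2 - C * x ^ 2 + P * x) :
    1 + deriv g 0 = (1 - α) * (1 - β + γ) ∧
    (β ≤ γ → 0 < 1 + deriv g 0 ∧ ∀ x : ℝ, 0 ≤ x → 0 < 1 + deriv g x) :=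
  stmt12_general α β γ P hα hβ hP B C hB hC g hg
end

section
/- Let β > γ > 0, α ∈ [0,1), M(α) > 0, P > 0, E = (β−γ)·P/(α(β−γ)+M(α)γ), and let x_R = E. Then V(x) = (x − x_R)² is a strict Lyapunov function for the ODE x' = F(x) with F(x) = (β − γ − β·x/(g(x)+x))·x on (0, ∞): that is, F(x)·V'(x) < 0 for all x > 0 with x ≠ E (where g(x) + x > 0 and g(x) ≥ 0). -/
/-!
Since `F x = x ((β - γ) g x - γ x) / (g x + x)`, it suffices that `(β - γ) g x - γ x` has the sign
of `E - x`. With `u` the square root in `g`, `Mα ((β - γ) g x - γ x) = (β - γ) u - w` for an affine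
function `w` of `x`, and `(β - γ)² u² - w²` factors as `Mα β x ((β - γ) P - (α (β - γ) + Mα γ) x)`,
which has the sign of `E - x`. For `x < E` this gives `(β - γ) u > |w|`; for `x > E` one checks
`w > 0`, hence `(β - γ) u < w`.
-/

lemma radicand_pos {B C M P : ℝ} (hK : 0 < B ^ 2 - C - (M - B) ^ 2) (hP : P ≠ 0) (x : ℝ) :
    0 < (B * x - P / 2) ^ 2 - C * x ^ 2 + M * P * x := by
  have hBC : 0 < B ^ 2 - C := by nlinarith [sq_nonneg (M - B)]
  have hsq : 4 * (B ^ 2 - C) * ((B * x - P / 2) ^ 2 - C * x ^ 2 + M * P * x)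
      = (2 * (B ^ 2 - C) * x + (M - B) * P) ^ 2 + (B ^ 2 - C - (M - B) ^ 2) * P ^ 2 := by
    ring
  have hprod : 0 < 4 * (B ^ 2 - C) * ((B * x - P / 2) ^ 2 - C * x ^ 2 + M * P * x) := by
    rw [hsq]
    exact add_pos_of_nonneg_of_pos (sq_nonneg _) (mul_pos hK (sq_pos_of_ne_zero hP))
  exact pos_of_mul_pos_right hprod (by positivity)

lemma growth_mul_lyapunov_deriv_eq {β γ G x E : ℝ} (h : G + x ≠ 0) :
    (β - γ - β * x / (G + x)) * x * (2 * (x - E))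
      = ((β - γ) * G - γ * x) * (x - E) * (2 * x / (G + x)) := by
  field_simp
  ring

section
variable {α β γ M P B C : ℝ}

lemma sq_sub_sub_sq_eq (hB : B = (α + M + (1 - α) * (β - γ)) / 2)
    (hC : C = M * (α - (1 - α) * γ)) :
    B ^ 2 - C - (M - B) ^ 2 = M * (1 - α) * β := by
  subst hB hC
  ring

lemma sq_mul_radicand_sub_sq_eq (hB : B = (α + M + (1 - α) * (β - γ)) / 2)
    (hC : C = M * (α - (1 - α) * γ)) (x : ℝ) :
    (β - γ) ^ 2 * ((B * x - P / 2) ^ 2 - C * x ^ 2 + M * P * x)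
        - (γ * M * x + (β - γ) * (B * x - P / 2)) ^ 2
      = M * β * x * ((β - γ) * P - (α * (β - γ) + M * γ) * x) := by
  subst hB hC
  ring

lemma affine_pos_of_gt_threshold (hB : B = (α + M + (1 - α) * (β - γ)) / 2)
    (hα0 : 0 ≤ α) (hα1 : α ≤ 1) (hM : 0 < M) (hγ : 0 < γ) (hβγ : γ < β) (hP : 0 < P) {x : ℝ}
    (hx : (β - γ) * P < (α * (β - γ) + M * γ) * x) :
    0 < γ * M * x + (β - γ) * (B * x - P / 2) := by
  have hβγ' : 0 < β - γ := sub_pos.mpr hβγ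
  have hden : 0 < α * (β - γ) + M * γ := by positivity
  -- at the threshold `x = (β - γ) P / den` the value is
  -- `(β - γ) P (γ M + (β - γ) (2 B - α)) / (2 den)`
  have hcoef : 0 < γ * M + (β - γ) * (2 * B - α) := by
    rw [hB]
    nlinarith [mul_nonneg (sub_nonneg.mpr hα1) hβγ'.le, mul_pos hγ hM, mul_pos hβγ' hM]
  have hBpos : 0 < γ * M + (β - γ) * B := by
    rw [hB]
    nlinarith [mul_nonneg (sub_nonneg.mpr hα1) hβγ'.le, mul_pos hγ hM, mul_pos hβγ' hM,
      mul_nonneg hβγ'.le hα0]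
  have hscaled : 0 < (α * (β - γ) + M * γ) * (γ * M * x + (β - γ) * (B * x - P / 2)) := by
    nlinarith [mul_lt_mul_of_pos_left hx hBpos, mul_pos (mul_pos hβγ' hP) hcoef]
  exact pos_of_mul_pos_right hscaled hden.le

lemma mul_sub_affine_mul_pos (hB : B = (α + M + (1 - α) * (β - γ)) / 2)
    (hC : C = M * (α - (1 - α) * γ))
    (hα0 : 0 ≤ α) (hα1 : α ≤ 1) (hM : 0 < M) (hγ : 0 < γ) (hβγ : γ < β) (hP : 0 < P)
    {x u : ℝ} (hx : 0 < x) (hu : 0 ≤ u)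
    (hu2 : u ^ 2 = (B * x - P / 2) ^ 2 - C * x ^ 2 + M * P * x)
    (ht : (β - γ) * P - (α * (β - γ) + M * γ) * x ≠ 0) :
    0 < ((β - γ) * u - (γ * M * x + (β - γ) * (B * x - P / 2)))
      * ((β - γ) * P - (α * (β - γ) + M * γ) * x) := by
  have hβγ' : 0 < β - γ := sub_pos.mpr hβγ
  have hkey := sq_mul_radicand_sub_sq_eq (P := P) hB hC x
  rw [← hu2] at hkey
  have hMβx : 0 < M * β * x := mul_pos (mul_pos hM (hγ.trans hβγ)) hx
  rcases ht.lt_or_gt with hneg | hpos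
  · have hw := affine_pos_of_gt_threshold hB hα0 hα1 hM hγ hβγ hP (sub_neg.mp hneg)
    have hsq : ((β - γ) * u) ^ 2 < (γ * M * x + (β - γ) * (B * x - P / 2)) ^ 2 := by
      nlinarith [mul_neg_of_pos_of_neg hMβx hneg]
    exact mul_pos_of_neg_of_neg (sub_neg.mpr (lt_of_pow_lt_pow_left₀ 2 hw.le hsq)) hneg
  · have hsq : (γ * M * x + (β - γ) * (B * x - P / 2)) ^ 2 < ((β - γ) * u) ^ 2 := by
      nlinarith [mul_pos hMβx hpos]
    exact mul_pos (sub_pos.mpr (lt_of_abs_lt (abs_lt_of_sq_lt_sq hsq (by positivity)))) hpos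

lemma sub_mul_sub_threshold_neg (hB : B = (α + M + (1 - α) * (β - γ)) / 2)
    (hC : C = M * (α - (1 - α) * γ))
    (hα0 : 0 ≤ α) (hα1 : α ≤ 1) (hM : 0 < M) (hγ : 0 < γ) (hβγ : γ < β) (hP : 0 < P)
    {x u G : ℝ} (hx : 0 < x) (hu : 0 ≤ u)
    (hu2 : u ^ 2 = (B * x - P / 2) ^ 2 - C * x ^ 2 + M * P * x)
    (hG : M * G = -B * x + P / 2 + u) (hxE : x ≠ (β - γ) * P / (α * (β - γ) + M * γ)) :
    ((β - γ) * G - γ * x) * (x - (β - γ) * P / (α * (β - γ) + M * γ)) < 0 := by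
  have hden : 0 < α * (β - γ) + M * γ := by
    have := sub_pos.mpr hβγ
    positivity
  set E := (β - γ) * P / (α * (β - γ) + M * γ) with hE
  set w := γ * M * x + (β - γ) * (B * x - P / 2)
  set t := (β - γ) * P - (α * (β - γ) + M * γ) * x with ht
  have hxE' : (α * (β - γ) + M * γ) * (x - E) = -t := by
    rw [hE, ht, mul_sub, mul_div_cancel₀ _ hden.ne']
    ring
  have htne : t ≠ 0 := fun h ↦ hxE (by
    rw [h, neg_zero, mul_eq_zero] at hxE'
    exact sub_eq_zero.mp (hxE'.resolve_left hden.ne'))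
  have hsign : 0 < ((β - γ) * u - w) * t :=
    mul_sub_affine_mul_pos hB hC hα0 hα1 hM hγ hβγ hP hx hu hu2 htne
  have hprod : M * (α * (β - γ) + M * γ) * (((β - γ) * G - γ * x) * (x - E))
      = -(((β - γ) * u - w) * t) := by
    linear_combination
      (α * (β - γ) + M * γ) * (x - E) * (β - γ) * hG + ((β - γ) * u - w) * hxE'
  refine neg_of_mul_neg_right (a := M * (α * (β - γ) + M * γ)) ?_ (by positivity)
  rw [hprod]
  exact neg_neg_of_pos hsign

end

theorem stmt14_general (α β γ Mα P : ℝ) (hα : α ∈ Set.Ico (0:ℝ) 1)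
    (hγ : 0 < γ) (hβγ : γ < β)
    (hM : 0 < Mα) (hP : 0 < P)
    (B C : ℝ) (hB : B = (α + Mα + (1 - α) * (β - γ)) / 2)
    (hC : C = Mα * (α - (1 - α) * γ))
    (g : ℝ → ℝ)
    (hg : ∀ x : ℝ, g x =
      (-B * x + P / 2 +
        Real.sqrt ((B * x - P / 2) ^ 2 - C * x ^ 2 + Mα * P * x)) / Mα)
    (E : ℝ) (hE : E = (β - γ) * P / (α * (β - γ) + Mα * γ)) :
    ∀ x : ℝ, 0 < x → x ≠ E → 0 < g x + x → 0 ≤ g x →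
      ((β - γ - β * x / (g x + x)) * x) * (2 * (x - E)) < 0 := by
  obtain ⟨hα0, hα1⟩ := hα
  intro x hx hxE hgx _
  have hrad := radicand_pos (by
    rw [sq_sub_sub_sq_eq hB hC]
    exact mul_pos (mul_pos hM (sub_pos.mpr hα1)) (hγ.trans hβγ)) hP.ne' x
  have hMg : Mα * g x = -B * x + P / 2 + √((B * x - P / 2) ^ 2 - C * x ^ 2 + Mα * P * x) := by
    rw [hg x]
    field_simp
  subst hE
  rw [growth_mul_lyapunov_deriv_eq hgx.ne']
  refine mul_neg_of_neg_of_pos ?_ (by positivity)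
  exact sub_mul_sub_threshold_neg hB hC hα0 hα1.le hM hγ hβγ hP hx (Real.sqrt_nonneg _)
    (Real.sq_sqrt hrad.le) hMg hxE

theorem stmt14 (α β γ Mα P : ℝ) (hα : α ∈ Set.Ico (0:ℝ) 1)
    (hγ : 0 < γ) (hβγ : γ < β) (hγα : γ < α / (1 - α))
    (hMα : α ≤ Mα) (hM : 0 < Mα) (hP : 0 < P)
    (B C : ℝ) (hB : B = (α + Mα + (1 - α) * (β - γ)) / 2)
    (hC : C = Mα * (α - (1 - α) * γ))
    (g : ℝ → ℝ)
    (hg : ∀ x : ℝ, g x =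
      (-B * x + P / 2 +
        Real.sqrt ((B * x - P / 2) ^ 2 - C * x ^ 2 + Mα * P * x)) / Mα)
    (E : ℝ) (hE : E = (β - γ) * P / (α * (β - γ) + Mα * γ)) :
    ∀ x : ℝ, 0 < x → x ≠ E → 0 < g x + x → 0 ≤ g x →
      ((β - γ - β * x / (g x + x)) * x) * (2 * (x - E)) < 0 :=
  stmt14_general α β γ Mα P hα hγ hβγ hM hP B C hB hC g hg E hE
end

section
/- Let α ∈ (0,1], β, γ > 0, and assume 0 < β ≤ γ. Then there exists T > 0 such that for all initial data S₀, I₀ > 0 there exist continuous functions S, I : [0,T] → (0,∞) satisfying the Volterra integral equations S(t) = S₀ + (1/Γ(α₁))·∫₀ᵗ f(S(s),I(s))·(t−s)^{α₁−1} ds and I(t) = I₀ − (1/Γ(α₂))·∫₀ᵗ f(S(s),I(s))·(t−s)^{α₂−1} ds for all t ∈ [0,T], where f(x,y) = (γ − β·x/(x+y))·y and α₁, α₂ ∈ (0,1] are fixed. -/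
/-!
The system is solved by Banach's fixed point theorem in `C([0, T], ℝ × ℝ)`. On the quadrant
`x, y > 0` the rate `(γ - β x / (x + y)) y = γ y - β · x y / (x + y)` is Lipschitz with
constant `γ + 2β ≤ 3γ`, independent of the data, and the operator `g ↦ ∫₀ᵗ g(s) (t - s)^(a-1) ds`
scales sup norms by `t^a / a`; so a `T` depending only on `α₁, α₂, γ` makes the Picard map a
contraction. To stay in the quadrant the rate is clamped; since the rate is nonnegative, `S` only
grows, and for small `T` the total change of `I` is at most `I₀ / 2`, so the clamp never acts.
-/

open MeasureTheory Set Filter Topology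
open scoped NNReal

/-- The Riemann–Liouville integral of order `a`, without its factor `1 / Γ(a)`. -/
noncomputable def volterraIntegral (a : ℝ) (g : ℝ → ℝ) (t : ℝ) : ℝ :=
  ∫ s in (0:ℝ)..t, g s * (t - s) ^ (a - 1)

section PowerKernel

variable {a : ℝ}

lemma intervalIntegrable_sub_rpow_s17 (ha : 0 < a) (c b b' : ℝ) :
    IntervalIntegrable (fun s => (c - s) ^ (a - 1)) volume b b' := by
  simpa using (intervalIntegral.intervalIntegrable_rpow' (a := c - b) (b := c - b')
    (r := a - 1) (by linarith)).comp_sub_left c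

lemma intervalIntegrable_mul_sub_rpow {g : ℝ → ℝ} {b b' : ℝ} (hg : ContinuousOn g (uIcc b b'))
    (ha : 0 < a) (c : ℝ) :
    IntervalIntegrable (fun s => g s * (c - s) ^ (a - 1)) volume b b' :=
  (intervalIntegrable_sub_rpow_s17 ha c b b').continuousOn_mul hg

lemma integral_sub_rpow_s17 (ha : 0 < a) (c b b' : ℝ) :
    ∫ s in b..b', (c - s) ^ (a - 1) = ((c - b) ^ a - (c - b') ^ a) / a := by
  rw [intervalIntegral.integral_comp_sub_left (fun x : ℝ => x ^ (a - 1)) c,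
    integral_rpow (Or.inl (by linarith)), sub_add_cancel]

lemma integral_sub_rpow_self (ha : 0 < a) (b c : ℝ) :
    ∫ s in b..c, (c - s) ^ (a - 1) = (c - b) ^ a / a := by
  rw [integral_sub_rpow_s17 ha, sub_self, Real.zero_rpow ha.ne', sub_zero]

end PowerKernel

section VolterraIntegral

variable {a M t : ℝ} {g : ℝ → ℝ}

lemma abs_integral_mul_le {k : ℝ → ℝ} {b c : ℝ} (hbc : b ≤ c) (hM : ∀ s ∈ Icc b c, |g s| ≤ M)
    (hk : ∀ᵐ s, s ∈ Ioc b c → 0 ≤ k s) (hki : IntervalIntegrable k volume b c) :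
    |∫ s in b..c, g s * k s| ≤ M * ∫ s in b..c, k s := by
  rw [← intervalIntegral.integral_const_mul (𝕜 := ℝ)]
  refine intervalIntegral.norm_integral_le_of_norm_le (f := fun s => g s * k s) hbc ?_
    (hki.const_mul M)
  filter_upwards [hk] with s hks hs
  rw [Real.norm_eq_abs, abs_mul, abs_of_nonneg (hks hs)]
  exact mul_le_mul_of_nonneg_right (hM s (Ioc_subset_Icc_self hs)) (hks hs)

lemma volterraIntegral_nonneg (hg : ∀ s ∈ Icc 0 t, 0 ≤ g s) (ht : 0 ≤ t) :
    0 ≤ volterraIntegral a g t :=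
  intervalIntegral.integral_nonneg ht fun s hs =>
    mul_nonneg (hg s hs) (Real.rpow_nonneg (sub_nonneg.2 hs.2) _)

lemma abs_volterraIntegral_le (hM : ∀ s ∈ Icc 0 t, |g s| ≤ M) (ha : 0 < a) (ht : 0 ≤ t) :
    |volterraIntegral a g t| ≤ M * t ^ a / a := by
  have h := abs_integral_mul_le ht hM
    (Eventually.of_forall fun s hs => Real.rpow_nonneg (sub_nonneg.2 hs.2) _)
    (intervalIntegrable_sub_rpow_s17 ha t 0 t)
  rwa [integral_sub_rpow_self ha, sub_zero, ← mul_div_assoc] at h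

lemma volterraIntegral_sub {g₁ g₂ : ℝ → ℝ} (hg₁ : ContinuousOn g₁ (Icc 0 t))
    (hg₂ : ContinuousOn g₂ (Icc 0 t)) (ha : 0 < a) (ht : 0 ≤ t) :
    volterraIntegral a g₁ t - volterraIntegral a g₂ t
      = volterraIntegral a (fun s => g₁ s - g₂ s) t := by
  rw [← uIcc_of_le ht] at hg₁ hg₂
  simp only [volterraIntegral, sub_mul]
  exact (intervalIntegral.integral_sub (intervalIntegrable_mul_sub_rpow hg₁ ha t)
    (intervalIntegrable_mul_sub_rpow hg₂ ha t)).symm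

/-- For `a ≤ 1` the kernel `(t - s) ^ (a - 1)` is decreasing in `t`, so the difference of the
integrals over `[0, t]` is controlled by `t ^ a - t' ^ a + (t' - t) ^ a ≤ (t' - t) ^ a`. -/
lemma abs_volterraIntegral_sub_le_of_le {t' : ℝ} (hg : ContinuousOn g (Icc 0 t'))
    (hM : ∀ s ∈ Icc 0 t', |g s| ≤ M) (ha : 0 < a) (ha₁ : a ≤ 1) (ht : 0 ≤ t) (htt' : t ≤ t') :
    |volterraIntegral a g t' - volterraIntegral a g t| ≤ 2 * M / a * (t' - t) ^ a := by
  have hgt : ContinuousOn g (uIcc 0 t) :=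
    hg.mono (by rw [uIcc_of_le ht]; exact Icc_subset_Icc_right htt')
  have hgt' : ContinuousOn g (uIcc t t') :=
    hg.mono (by rw [uIcc_of_le htt']; exact Icc_subset_Icc_left ht)
  have hk := intervalIntegrable_sub_rpow_s17 ha t 0 t
  have hk' := intervalIntegrable_sub_rpow_s17 ha t' 0 t
  have hsplit : volterraIntegral a g t' - volterraIntegral a g t
      = (∫ s in t..t', g s * (t' - s) ^ (a - 1))
        - ∫ s in (0:ℝ)..t, g s * ((t - s) ^ (a - 1) - (t' - s) ^ (a - 1)) := by
    simp only [volterraIntegral, mul_sub]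
    rw [← intervalIntegral.integral_add_adjacent_intervals (b := t)
      (intervalIntegrable_mul_sub_rpow hgt ha t') (intervalIntegrable_mul_sub_rpow hgt' ha t'),
      intervalIntegral.integral_sub (intervalIntegrable_mul_sub_rpow hgt ha t)
        (intervalIntegrable_mul_sub_rpow hgt ha t')]
    ring
  have htail : |∫ s in t..t', g s * (t' - s) ^ (a - 1)| ≤ M * (t' - t) ^ a / a := by
    have h := abs_integral_mul_le htt' (fun s hs => hM s ⟨ht.trans hs.1, hs.2⟩)
      (Eventually.of_forall fun s hs => Real.rpow_nonneg (sub_nonneg.2 hs.2) _)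
      (intervalIntegrable_sub_rpow_s17 ha t' t t')
    rwa [integral_sub_rpow_self ha, ← mul_div_assoc] at h
  have hbulk : |∫ s in (0:ℝ)..t, g s * ((t - s) ^ (a - 1) - (t' - s) ^ (a - 1))|
      ≤ M * (t ^ a - t' ^ a + (t' - t) ^ a) / a := by
    have h := abs_integral_mul_le ht (fun s hs => hM s ⟨hs.1, hs.2.trans htt'⟩) ?_ (hk.sub hk')
    · rw [intervalIntegral.integral_sub hk hk', integral_sub_rpow_self ha,
        integral_sub_rpow_s17 ha] at h
      exact h.trans_eq (by simp only [sub_zero]; ring)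
    filter_upwards [Measure.ae_ne volume t] with s hst hs
    exact sub_nonneg.2 (Real.rpow_le_rpow_of_nonpos (sub_pos.2 (lt_of_le_of_ne hs.2 hst))
      (by linarith) (by linarith))
  have hpow : t ^ a ≤ t' ^ a := Real.rpow_le_rpow ht htt' ha.le
  have hM0 : 0 ≤ M := (abs_nonneg _).trans (hM 0 ⟨le_rfl, ht.trans htt'⟩)
  rw [hsplit]
  calc _ ≤ M * (t' - t) ^ a / a + M * (t ^ a - t' ^ a + (t' - t) ^ a) / a :=
        (abs_sub _ _).trans (add_le_add htail hbulk)
    _ ≤ M * (t' - t) ^ a / a + M * (t' - t) ^ a / a := by gcongr; linarith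
    _ = 2 * M / a * (t' - t) ^ a := by ring

lemma volterraIntegral_congr {a t : ℝ} {g₁ g₂ : ℝ → ℝ} (h : ∀ s ∈ Icc 0 t, g₁ s = g₂ s)
    (ht : 0 ≤ t) : volterraIntegral a g₁ t = volterraIntegral a g₂ t :=
  intervalIntegral.integral_congr fun s hs => by
    rw [uIcc_of_le ht] at hs
    simp only [h s hs]

lemma continuousOn_volterraIntegral {T : ℝ} (hg : ContinuousOn g (Icc 0 T)) (ha : 0 < a)
    (ha₁ : a ≤ 1) : ContinuousOn (volterraIntegral a g) (Icc 0 T) := by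
  obtain ⟨M, hM⟩ := isCompact_Icc.exists_bound_of_continuousOn hg
  have hbulker : ∀ t ∈ Icc 0 T, ∀ t' ∈ Icc 0 T,
      ‖volterraIntegral a g t' - volterraIntegral a g t‖ ≤ 2 * M / a * |t' - t| ^ a := by
    intro t ht t' ht'
    rw [Real.norm_eq_abs]
    rcases le_total t t' with htt' | ht't
    · rw [abs_of_nonneg (sub_nonneg.2 htt')]
      exact abs_volterraIntegral_sub_le_of_le (hg.mono (Icc_subset_Icc_right ht'.2))
        (fun s hs => hM s ⟨hs.1, hs.2.trans ht'.2⟩) ha ha₁ ht.1 htt'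
    · rw [abs_sub_comm, abs_sub_comm t', abs_of_nonneg (sub_nonneg.2 ht't)]
      exact abs_volterraIntegral_sub_le_of_le (hg.mono (Icc_subset_Icc_right ht.2))
        (fun s hs => hM s ⟨hs.1, hs.2.trans ht.2⟩) ha ha₁ ht'.1 ht't
  intro t ht
  rw [ContinuousWithinAt, tendsto_iff_norm_sub_tendsto_zero]
  refine squeeze_zero' (Eventually.of_forall fun _ => norm_nonneg _)
    (eventually_nhdsWithin_of_forall fun t' ht' => hbulker t ht t' ht') ?_
  have hlim : Tendsto (fun t' => 2 * M / a * |t' - t| ^ a) (𝓝 t) (𝓝 (2 * M / a * |t - t| ^ a)) :=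
    (continuous_const.mul ((continuous_abs.comp (continuous_id.sub continuous_const)).rpow_const
      fun _ => Or.inr ha.le)).tendsto t
  rw [sub_self, abs_zero, Real.zero_rpow ha.ne', mul_zero] at hlim
  exact hlim.mono_left nhdsWithin_le_nhds

end VolterraIntegral

section VolterraSystem

variable {a T : ℝ}

lemma abs_mul_volterraIntegral_sub_le {g₁ g₂ : ℝ → ℝ} {δ t : ℝ} (c : ℝ)
    (hg₁ : ContinuousOn g₁ (Icc 0 T)) (hg₂ : ContinuousOn g₂ (Icc 0 T))
    (hδ : ∀ s ∈ Icc 0 T, |g₁ s - g₂ s| ≤ δ) (ha : 0 < a) (ht : t ∈ Icc 0 T) :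
    |c * volterraIntegral a g₁ t - c * volterraIntegral a g₂ t| ≤ |c| * T ^ a / a * δ := by
  have hsub : Icc 0 t ⊆ Icc 0 T := Icc_subset_Icc_right ht.2
  have hδ0 : 0 ≤ δ := (abs_nonneg _).trans (hδ 0 ⟨le_rfl, ht.1.trans ht.2⟩)
  have hV := abs_volterraIntegral_le (a := a) (fun s hs => hδ s (hsub hs)) ha ht.1
  rw [← mul_sub, abs_mul, volterraIntegral_sub (hg₁.mono hsub) (hg₂.mono hsub) ha ht.1]
  calc |c| * |volterraIntegral a (fun s => g₁ s - g₂ s) t| ≤ |c| * (δ * T ^ a / a) := by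
        gcongr
        exact hV.trans (div_le_div_of_nonneg_right
          (mul_le_mul_of_nonneg_left (Real.rpow_le_rpow ht.1 ht.2 ha.le) hδ0) ha.le)
    _ = |c| * T ^ a / a * δ := by ring

/-- The solution is the fixed point of the `K`-contracting integral operator on
`C([0, T], ℝ × ℝ)`, extended constantly outside `[0, T]`. -/
theorem exists_continuous_volterraSystem {a₁ a₂ : ℝ} {L K : ℝ≥0} {F : ℝ × ℝ → ℝ} (hT : 0 ≤ T)
    (ha₁ : 0 < a₁) (ha₁' : a₁ ≤ 1) (ha₂ : 0 < a₂) (ha₂' : a₂ ≤ 1) (hF : LipschitzWith L F)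
    (hK : K < 1) (c₁ c₂ u₀ v₀ : ℝ) (h₁ : |c₁| * T ^ a₁ / a₁ * L ≤ K)
    (h₂ : |c₂| * T ^ a₂ / a₂ * L ≤ K) :
    ∃ u v : ℝ → ℝ, Continuous u ∧ Continuous v ∧ ∀ t ∈ Icc 0 T,
      u t = u₀ + c₁ * volterraIntegral a₁ (fun s => F (u s, v s)) t ∧
      v t = v₀ + c₂ * volterraIntegral a₂ (fun s => F (u s, v s)) t := by
  let rhs : C(Icc 0 T, ℝ × ℝ) → ℝ → ℝ := fun w => F ∘ IccExtend hT w
  have hrhs : ∀ w, ContinuousOn (rhs w) (Icc 0 T) := fun w =>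
    (hF.continuous.comp (ContinuousMap.IccExtend hT w).continuous).continuousOn
  have hrhs_sub : ∀ w w' s, |rhs w s - rhs w' s| ≤ L * dist w w' := fun w w' s =>
    (hF.dist_le_mul _ _).trans (mul_le_mul_of_nonneg_left (ContinuousMap.dist_apply_le_dist _) L.2)
  let Φ : C(Icc 0 T, ℝ × ℝ) → C(Icc 0 T, ℝ × ℝ) := fun w =>
    ⟨(Icc 0 T).domRestrict fun t =>
      (u₀ + c₁ * volterraIntegral a₁ (rhs w) t, v₀ + c₂ * volterraIntegral a₂ (rhs w) t),
      ((continuousOn_const.add (continuousOn_const.mul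
          (continuousOn_volterraIntegral (hrhs w) ha₁ ha₁'))).prodMk
        (continuousOn_const.add (continuousOn_const.mul
          (continuousOn_volterraIntegral (hrhs w) ha₂ ha₂')))).domRestrict⟩
  have hΦ_apply : ∀ w τ, Φ w τ = (u₀ + c₁ * volterraIntegral a₁ (rhs w) τ,
      v₀ + c₂ * volterraIntegral a₂ (rhs w) τ) := fun _ _ => rfl
  have hΦ : ContractingWith K Φ := by
    refine ⟨hK, LipschitzWith.of_dist_le_mul fun w w' => ?_⟩
    refine (ContinuousMap.dist_le (by positivity)).2 fun τ => ?_
    rw [hΦ_apply, hΦ_apply, Prod.dist_eq, Real.dist_eq, Real.dist_eq, add_sub_add_left_eq_sub,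
      add_sub_add_left_eq_sub]
    refine max_le ?_ ?_
    · calc _ ≤ |c₁| * T ^ a₁ / a₁ * (L * dist w w') := abs_mul_volterraIntegral_sub_le c₁
            (hrhs w) (hrhs w') (fun s _ => hrhs_sub w w' s) ha₁ τ.2
        _ ≤ K * dist w w' := by rw [← mul_assoc]; exact mul_le_mul_of_nonneg_right h₁ dist_nonneg
    · calc _ ≤ |c₂| * T ^ a₂ / a₂ * (L * dist w w') := abs_mul_volterraIntegral_sub_le c₂
            (hrhs w) (hrhs w') (fun s _ => hrhs_sub w w' s) ha₂ τ.2
        _ ≤ K * dist w w' := by rw [← mul_assoc]; exact mul_le_mul_of_nonneg_right h₂ dist_nonneg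
  set w := ContractingWith.fixedPoint Φ hΦ
  have hw : Φ w = w := hΦ.fixedPoint_isFixedPt
  have hwc := (ContinuousMap.IccExtend hT w).continuous
  refine ⟨fun t => (IccExtend hT w t).1, fun t => (IccExtend hT w t).2,
    continuous_fst.comp hwc, continuous_snd.comp hwc, fun t ht => ?_⟩
  dsimp only
  rw [IccExtend_of_mem hT w ht]
  exact Prod.ext_iff.1 (DFunLike.congr_fun hw ⟨t, ht⟩).symm

end VolterraSystem

section SIRRate

noncomputable def sirRate (β γ x y : ℝ) : ℝ := (γ - β * x / (x + y)) * y

variable {β γ x y : ℝ}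

lemma sirRate_eq_sub : sirRate β γ x y = γ * y - β * (x * y / (x + y)) := by
  unfold sirRate; ring

lemma sirRate_nonneg (hβ : 0 ≤ β) (hβγ : β ≤ γ) (hx : 0 ≤ x) (hy : 0 ≤ y) :
    0 ≤ sirRate β γ x y := by
  have hfrac : x / (x + y) ≤ 1 := div_le_one_of_le₀ (le_add_of_nonneg_right hy) (by positivity)
  have hβfrac : β * x / (x + y) ≤ β := by
    rw [mul_div_assoc]; exact mul_le_of_le_one_right hβ hfrac
  exact mul_nonneg (by linarith) hy

lemma sirRate_le (hβ : 0 ≤ β) (hx : 0 ≤ x) (hy : 0 ≤ y) : sirRate β γ x y ≤ γ * y :=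
  mul_le_mul_of_nonneg_right (sub_le_self γ (by positivity)) hy

lemma abs_mul_div_add_sub_le {x₁ x₂ : ℝ} (hx₁ : 0 < x₁) (hx₂ : 0 < x₂) (hy : 0 ≤ y) :
    |x₁ * y / (x₁ + y) - x₂ * y / (x₂ + y)| ≤ |x₁ - x₂| := by
  have hd₁ : 0 < x₁ + y := by positivity
  have hd₂ : 0 < x₂ + y := by positivity
  have heq : x₁ * y / (x₁ + y) - x₂ * y / (x₂ + y)
      = y ^ 2 / ((x₁ + y) * (x₂ + y)) * (x₁ - x₂) := by
    field_simp; ring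
  have hfrac : y ^ 2 / ((x₁ + y) * (x₂ + y)) ≤ 1 :=
    div_le_one_of_le₀ (by nlinarith) (by positivity)
  rw [heq, abs_mul, abs_of_nonneg (by positivity)]
  exact mul_le_of_le_one_left (abs_nonneg _) hfrac

lemma lipschitzOnWith_sirRate :
    LipschitzOnWith (‖γ‖₊ + 2 * ‖β‖₊) (fun z : ℝ × ℝ => sirRate β γ z.1 z.2) (Ioi 0 ×ˢ Ioi 0) := by
  refine LipschitzOnWith.of_dist_le_mul fun ⟨x₁, y₁⟩ h₁ ⟨x₂, y₂⟩ h₂ => ?_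
  simp only [mem_prod, mem_Ioi] at h₁ h₂
  have hmean : |x₁ * y₁ / (x₁ + y₁) - x₂ * y₂ / (x₂ + y₂)| ≤ |x₁ - x₂| + |y₁ - y₂| := by
    have hy := abs_mul_div_add_sub_le (y := x₂) h₁.2 h₂.2 h₂.1.le
    rw [mul_comm y₁, mul_comm y₂, add_comm y₁, add_comm y₂] at hy
    calc _ ≤ |x₁ * y₁ / (x₁ + y₁) - x₂ * y₁ / (x₂ + y₁)|
          + |x₂ * y₁ / (x₂ + y₁) - x₂ * y₂ / (x₂ + y₂)| := abs_sub_le _ _ _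
      _ ≤ _ := add_le_add (abs_mul_div_add_sub_le h₁.1 h₂.1 h₁.2.le) hy
  simp only [Prod.dist_eq, Real.dist_eq, sirRate_eq_sub, NNReal.coe_add, NNReal.coe_mul,
    coe_nnnorm, Real.norm_eq_abs, NNReal.coe_ofNat]
  have hx := le_max_left |x₁ - x₂| |y₁ - y₂|
  have hy := le_max_right |x₁ - x₂| |y₁ - y₂|
  calc _ = |γ * (y₁ - y₂) - β * (x₁ * y₁ / (x₁ + y₁) - x₂ * y₂ / (x₂ + y₂))| := by ring_nf
    _ ≤ |γ| * |y₁ - y₂| + |β| * (|x₁ - x₂| + |y₁ - y₂|) := by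
        refine (abs_sub _ _).trans ?_
        rw [abs_mul, abs_mul]
        gcongr
    _ ≤ _ := by
        have := abs_nonneg γ; have := abs_nonneg β
        nlinarith

end SIRRate

section ClampedSIRRate

variable {β γ S₀ I₀ : ℝ}

noncomputable def clampedSirRate (β γ S₀ I₀ : ℝ) (z : ℝ × ℝ) : ℝ :=
  sirRate β γ (max z.1 S₀) (max (min z.2 (3 / 2 * I₀)) (I₀ / 2))

lemma lipschitzWith_clampedSirRate (hS₀ : 0 < S₀) (hI₀ : 0 < I₀) :
    LipschitzWith (‖γ‖₊ + 2 * ‖β‖₊) (clampedSirRate β γ S₀ I₀) := by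
  let clamp : ℝ × ℝ → ℝ × ℝ := fun z => (max z.1 S₀, max (min z.2 (3 / 2 * I₀)) (I₀ / 2))
  have hclamp : LipschitzWith 1 clamp := by
    simpa using (LipschitzWith.prod_fst.max_const S₀).prodMk
      ((LipschitzWith.prod_snd.min_const (3 / 2 * I₀)).max_const (I₀ / 2))
  have h := (lipschitzOnWith_sirRate (β := β) (γ := γ)).comp hclamp.lipschitzOnWith (s := univ)
    fun z _ => ⟨hS₀.trans_le (le_max_right _ _), (half_pos hI₀).trans_le (le_max_right _ _)⟩
  rw [mul_one, lipschitzOnWith_univ] at h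
  exact h

lemma clampedSirRate_nonneg (hβ : 0 ≤ β) (hβγ : β ≤ γ) (hS₀ : 0 ≤ S₀) (hI₀ : 0 ≤ I₀)
    (z : ℝ × ℝ) : 0 ≤ clampedSirRate β γ S₀ I₀ z :=
  sirRate_nonneg hβ hβγ (hS₀.trans (le_max_right _ _))
    ((div_nonneg hI₀ zero_le_two).trans (le_max_right _ _))

lemma clampedSirRate_le (hβ : 0 ≤ β) (hγ : 0 ≤ γ) (hS₀ : 0 ≤ S₀) (hI₀ : 0 ≤ I₀) (z : ℝ × ℝ) :
    clampedSirRate β γ S₀ I₀ z ≤ γ * (3 / 2 * I₀) :=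
  (sirRate_le hβ (hS₀.trans (le_max_right _ _)) ((div_nonneg hI₀ zero_le_two).trans (le_max_right _ _))).trans
    (mul_le_mul_of_nonneg_left (max_le (min_le_right _ _) (by linarith)) hγ)

lemma clampedSirRate_of_le_of_abs_sub_le {x y : ℝ} (hx : S₀ ≤ x) (hy : |y - I₀| ≤ I₀ / 2) :
    clampedSirRate β γ S₀ I₀ (x, y) = sirRate β γ x y := by
  obtain ⟨hy₁, hy₂⟩ := abs_le.1 hy
  rw [clampedSirRate, max_eq_left hx, min_eq_left (by linarith), max_eq_left (by linarith)]

end ClampedSIRRate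

lemma eventually_rpow_div_lt {a : ℝ} (ha : 0 < a) (D : ℝ) {ε : ℝ} (hε : 0 < ε) :
    ∀ᶠ T in 𝓝 0, T ^ a / D < ε := by
  have hlim : Tendsto (fun T : ℝ => T ^ a / D) (𝓝 0) (𝓝 ((0 : ℝ) ^ a / D)) :=
    ((continuous_id.rpow_const fun _ => Or.inr ha.le).div_const D).tendsto 0
  rw [Real.zero_rpow ha.ne', zero_div] at hlim
  exact hlim.eventually (gt_mem_nhds hε)

lemma abs_one_div_Gamma_mul_rpow_div {a : ℝ} (ha : 0 < a) (T : ℝ) :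
    |1 / Real.Gamma a| * T ^ a / a = T ^ a / (Real.Gamma a * a) := by
  rw [abs_of_pos (one_div_pos.2 (Real.Gamma_pos_of_pos ha))]
  field_simp

lemma abs_one_div_Gamma_mul_rpow_div_mul_le_half {a β γ T : ℝ} (ha : 0 < a) (hβ : 0 < β)
    (hβγ : β ≤ γ) (hT : T ^ a / (Real.Gamma a * a) ≤ 1 / (6 * γ)) :
    |1 / Real.Gamma a| * T ^ a / a * ↑(‖γ‖₊ + 2 * ‖β‖₊) ≤ ((2⁻¹ : ℝ≥0) : ℝ) := by
  have hγ : 0 < γ := hβ.trans_le hβγ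
  rw [abs_one_div_Gamma_mul_rpow_div ha]
  push_cast [coe_nnnorm, Real.norm_eq_abs, abs_of_pos hγ, abs_of_pos hβ]
  calc _ ≤ 1 / (6 * γ) * (γ + 2 * β) := mul_le_mul_of_nonneg_right hT (by positivity)
    _ ≤ 2⁻¹ := by
      rw [div_mul_eq_mul_div, one_mul, div_le_iff₀ (by positivity)]
      linarith

theorem exists_sir_solution {α₁ α₂ β γ T S₀ I₀ : ℝ} (ha₁ : 0 < α₁) (ha₁' : α₁ ≤ 1) (ha₂ : 0 < α₂)
    (ha₂' : α₂ ≤ 1) (hβ : 0 < β) (hβγ : β ≤ γ) (hT : 0 ≤ T)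
    (hT₁ : T ^ α₁ / (Real.Gamma α₁ * α₁) ≤ 1 / (6 * γ))
    (hT₂ : T ^ α₂ / (Real.Gamma α₂ * α₂) ≤ 1 / (6 * γ)) (hS₀ : 0 < S₀) (hI₀ : 0 < I₀) :
    ∃ S I : ℝ → ℝ, Continuous S ∧ Continuous I ∧ (∀ t ∈ Icc 0 T, 0 < S t ∧ 0 < I t) ∧
      (∀ t ∈ Icc 0 T,
        S t = S₀ + 1 / Real.Gamma α₁ * volterraIntegral α₁ (fun s => sirRate β γ (S s) (I s)) t) ∧
      (∀ t ∈ Icc 0 T,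
        I t = I₀ - 1 / Real.Gamma α₂ * volterraIntegral α₂ (fun s => sirRate β γ (S s) (I s)) t) := by
  have hγ : 0 < γ := hβ.trans_le hβγ
  have hF_nonneg := clampedSirRate_nonneg hβ.le hβγ hS₀.le hI₀.le
  have hF_le := clampedSirRate_le hβ.le hγ.le hS₀.le hI₀.le
  obtain ⟨S, I, hS, hI, hSI⟩ := exists_continuous_volterraSystem hT ha₁ ha₁' ha₂ ha₂'
    (lipschitzWith_clampedSirRate hS₀ hI₀) (by norm_num) (1 / Real.Gamma α₁)
    (-(1 / Real.Gamma α₂)) S₀ I₀ (abs_one_div_Gamma_mul_rpow_div_mul_le_half ha₁ hβ hβγ hT₁)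
    (by simpa only [abs_neg] using abs_one_div_Gamma_mul_rpow_div_mul_le_half ha₂ hβ hβγ hT₂)
  have hS_ge : ∀ t ∈ Icc 0 T, S₀ ≤ S t := fun t ht => by
    rw [(hSI t ht).1]
    exact le_add_of_nonneg_right (mul_nonneg (one_div_pos.2 (Real.Gamma_pos_of_pos ha₁)).le
      (volterraIntegral_nonneg (fun s _ => hF_nonneg _) ht.1))
  have hI_near : ∀ t ∈ Icc 0 T, |I t - I₀| ≤ I₀ / 2 := fun t ht => by
    rw [(hSI t ht).2, add_sub_cancel_left, abs_mul, abs_neg]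
    have hV := abs_volterraIntegral_le (a := α₂)
      (fun s _ => (abs_of_nonneg (hF_nonneg (S s, I s))).trans_le (hF_le _)) ha₂ ht.1
    calc _ ≤ |1 / Real.Gamma α₂| * (γ * (3 / 2 * I₀) * T ^ α₂ / α₂) := by
          gcongr
          exact hV.trans (by gcongr; exacts [ht.1, ht.2])
      _ = T ^ α₂ / (Real.Gamma α₂ * α₂) * (γ * (3 / 2 * I₀)) := by
          rw [← abs_one_div_Gamma_mul_rpow_div ha₂]; ring
      _ ≤ 1 / (6 * γ) * (γ * (3 / 2 * I₀)) := by gcongr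
      _ ≤ I₀ / 2 := by
        rw [div_mul_eq_mul_div, one_mul, div_le_iff₀ (by positivity)]
        nlinarith
  have hF_eq : ∀ t ∈ Icc 0 T, ∀ s ∈ Icc 0 t,
      clampedSirRate β γ S₀ I₀ (S s, I s) = sirRate β γ (S s) (I s) := fun t ht s hs =>
    have hs' : s ∈ Icc 0 T := ⟨hs.1, hs.2.trans ht.2⟩
    clampedSirRate_of_le_of_abs_sub_le (hS_ge s hs') (hI_near s hs')
  refine ⟨S, I, hS, hI, fun t ht => ⟨hS₀.trans_le (hS_ge t ht), ?_⟩, fun t ht => ?_,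
    fun t ht => ?_⟩
  · linarith [abs_le.1 (hI_near t ht)]
  · rw [(hSI t ht).1, volterraIntegral_congr (hF_eq t ht) ht.1]
  · rw [(hSI t ht).2, volterraIntegral_congr (hF_eq t ht) ht.1, neg_mul, ← sub_eq_add_neg]

theorem stmt17 (α₁ α₂ β γ : ℝ)
    (hα₁ : α₁ ∈ Set.Ioc (0:ℝ) 1) (hα₂ : α₂ ∈ Set.Ioc (0:ℝ) 1)
    (hβ : 0 < β) (hβγ : β ≤ γ)
    (f : ℝ → ℝ → ℝ) (hf : ∀ x y : ℝ, f x y = (γ - β * x / (x + y)) * y) :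
    ∃ T : ℝ, 0 < T ∧
      ∀ S₀ I₀ : ℝ, 0 < S₀ → 0 < I₀ →
        ∃ S I : ℝ → ℝ,
          ContinuousOn S (Set.Icc 0 T) ∧ ContinuousOn I (Set.Icc 0 T) ∧
          (∀ t ∈ Set.Icc (0:ℝ) T, 0 < S t ∧ 0 < I t) ∧
          (∀ t ∈ Set.Icc (0:ℝ) T,
            S t = S₀ + (1 / Real.Gamma α₁) *
              ∫ s in (0:ℝ)..t, f (S s) (I s) * (t - s) ^ (α₁ - 1)) ∧
          (∀ t ∈ Set.Icc (0:ℝ) T,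
            I t = I₀ - (1 / Real.Gamma α₂) *
              ∫ s in (0:ℝ)..t, f (S s) (I s) * (t - s) ^ (α₂ - 1)) := by
  obtain ⟨ha₁, ha₁'⟩ := hα₁
  obtain ⟨ha₂, ha₂'⟩ := hα₂
  have hε : 0 < 1 / (6 * γ) := by have := hβ.trans_le hβγ; positivity
  obtain ⟨T, ⟨hT₁, hT₂⟩, hT⟩ := ((((eventually_rpow_div_lt ha₁ _ hε).and
    (eventually_rpow_div_lt ha₂ _ hε)).filter_mono nhdsWithin_le_nhds).and
      (self_mem_nhdsWithin (s := Ioi 0))).exists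
  obtain rfl : f = sirRate β γ := funext fun x => funext (hf x)
  refine ⟨T, hT, fun S₀ I₀ hS₀ hI₀ => ?_⟩
  obtain ⟨S, I, hS, hI, hpos, hSeq, hIeq⟩ := exists_sir_solution ha₁ ha₁' ha₂ ha₂' hβ hβγ
    (le_of_lt hT) hT₁.le hT₂.le hS₀ hI₀
  exact ⟨S, I, hS.continuousOn, hI.continuousOn, hpos, hSeq, hIeq⟩
end
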